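/- arXiv:1701.06201 — 5 statements merged into one kernel-verified Lean document; each statement's English description precedes it below -/
import Mathlib

section
/- Let 1 ≤ s < t and 0 < τ < 1, and set T = ⌊τN⌋. For every probability vector p = (p₀,…,p_t) (p_k ≥ 0, Σ p_k = 1), the error probability of the τ-weight decision rule satisfies ε_s(p, τ-WDR, X) ≤ max{ |B¹_s(T,X)|/C(t,s), |B²_{s+1}(T,X)|/C(t,s+1) }, and equality holds for every p with p_s > 0, p_{s+1} > 0 and p_s + p_{s+1} = 1. Consequently the maximum over all p of ε_s(p, τ-WDR, X) is attained at any such p. -/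
/-- Response vector `x(S)`: componentwise Boolean OR of the columns `x(j)`, `j ∈ S`. -/
def resp {N t : ℕ} (X : Fin t → Fin N → Bool) (S : Finset (Fin t)) : Fin N → Bool :=
  fun i => decide (∃ j ∈ S, X j i = true)

/-- Hamming weight of a binary vector. -/
def wt {N : ℕ} (v : Fin N → Bool) : ℕ :=
  (Finset.univ.filter fun i => v i = true).card

/-- `B¹_k(T,X) = {S ⊆ [t] : |S| = k, |x(S)| ≥ T+1}`. -/
def B1 {N t : ℕ} (X : Fin t → Fin N → Bool) (k T : ℕ) : Finset (Finset (Fin t)) :=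
  Finset.univ.filter fun S => S.card = k ∧ T + 1 ≤ wt (resp X S)

/-- `B²_k(T,X) = {S ⊆ [t] : |S| = k, |x(S)| ≤ T}`. -/
def B2 {N t : ℕ} (X : Fin t → Fin N → Bool) (k T : ℕ) : Finset (Finset (Fin t)) :=
  Finset.univ.filter fun S => S.card = k ∧ wt (resp X S) ≤ T

/-- The error probability `ε_s(p, τ-WDR, X)` of the `τ`-weight decision rule with
threshold `T = ⌊τN⌋`, for a probability vector `p = (p_0, …, p_t)`.  A term whose
normalizing sum `Σ p_l` vanishes is `0`, which is the Lean convention `x / 0 = 0`. -/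
noncomputable def epsWDR {N t : ℕ} (X : Fin t → Fin N → Bool) (s T : ℕ) (p : ℕ → ℝ) : ℝ :=
  max
    (∑ k ∈ Finset.range (s + 1),
      (p k / ∑ l ∈ Finset.range (s + 1), p l) * (((B1 X k T).card : ℝ) / (t.choose k : ℝ)))
    (∑ k ∈ Finset.Icc (s + 1) t,
      (p k / ∑ l ∈ Finset.Icc (s + 1) t, p l) * (((B2 X k T).card : ℝ) / (t.choose k : ℝ)))

/-! By the local LYM inequality, and since the shadow of the `(k+1)`-sets whose response has
weight `≤ T` consists of `k`-sets with the same property (the response is monotone in `S`),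
`|B²_k|/C(t,k)` is antitone in `k`. As `|B¹_k| + |B²_k| = C(t,k)`, the ratio `|B¹_k|/C(t,k)` is
monotone for `k ≤ t`. The two terms of `ε_s` are weighted averages of these ratios over `k ≤ s`
and `k ≥ s + 1`, hence bounded by the ratio at `k = s` resp. `k = s + 1`, with equality when `p`
is concentrated on `{s, s + 1}`. -/

open Finset
open scoped FinsetFamily

section ResponseWeight

variable {N t : ℕ} (X : Fin t → Fin N → Bool)

lemma wt_resp_mono {S S' : Finset (Fin t)} (h : S ⊆ S') : wt (resp X S) ≤ wt (resp X S') := by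
  refine card_le_card fun i hi => ?_
  simp only [resp, mem_filter, mem_univ, true_and, decide_eq_true_eq] at hi ⊢
  obtain ⟨j, hj, hXj⟩ := hi
  exact ⟨j, h hj, hXj⟩

lemma B2_sized (k T : ℕ) : (B2 X k T : Set (Finset (Fin t))).Sized k :=
  fun _ hS => (mem_filter.1 hS).2.1

lemma shadow_B2_succ_subset (k T : ℕ) : ∂ (B2 X (k + 1) T) ⊆ B2 X k T := by
  intro S hS
  obtain ⟨S', hS', a, -, rfl⟩ := mem_shadow_iff.1 hS
  simp only [B2, mem_filter, mem_univ, true_and] at hS' ⊢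
  exact ⟨(B2_sized X (k + 1) T).shadow hS, (wt_resp_mono X (erase_subset a S')).trans hS'.2⟩

lemma card_B1_add_card_B2 (k T : ℕ) : #(B1 X k T) + #(B2 X k T) = t.choose k := by
  have hB1 : B1 X k T = (univ.powersetCard k).filter fun S => ¬ wt (resp X S) ≤ T := by
    ext S; simp [B1]
  have hB2 : B2 X k T = (univ.powersetCard k).filter fun S => wt (resp X S) ≤ T := by
    ext S; simp [B2]
  rw [hB1, hB2, add_comm, card_filter_add_card_filter_not, card_powersetCard, card_univ,
    Fintype.card_fin]

/-- For `k > t` the ratio is `0` by the convention `x / 0 = 0`, so antitonicity holds on all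
of `ℕ`. -/
lemma antitone_card_B2_div_choose (T : ℕ) :
    Antitone fun k => (#(B2 X k T) : ℝ) / t.choose k := by
  refine antitone_nat_of_succ_le fun k => ?_
  have hLYM := local_lubell_yamamoto_meshalkin_inequality_div (𝕜 := ℝ) (Nat.add_one_ne_zero k)
    (B2_sized X (k + 1) T)
  rw [Fintype.card_fin, Nat.add_sub_cancel] at hLYM
  have hshadow : (#(∂ (B2 X (k + 1) T)) : ℝ) ≤ #(B2 X k T) := by
    exact_mod_cast card_le_card (shadow_B2_succ_subset X k T)
  exact hLYM.trans (div_le_div_of_nonneg_right hshadow (Nat.cast_nonneg _))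

lemma card_B1_div_choose_le {T k j : ℕ} (hkj : k ≤ j) (hjt : j ≤ t) :
    (#(B1 X k T) : ℝ) / t.choose k ≤ #(B1 X j T) / t.choose j := by
  have hB1 : ∀ i ≤ t, (#(B1 X i T) : ℝ) / t.choose i = 1 - #(B2 X i T) / t.choose i := by
    intro i hi
    have hchoose : (t.choose i : ℝ) ≠ 0 := by exact_mod_cast (Nat.choose_pos hi).ne'
    rw [eq_sub_iff_add_eq, ← add_div, div_eq_one_iff_eq hchoose]
    exact_mod_cast card_B1_add_card_B2 X i T
  rw [hB1 k (hkj.trans hjt), hB1 j hjt]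
  exact sub_le_sub_left (antitone_card_B2_div_choose X T hkj) 1

end ResponseWeight

section WeightedAverage

variable {ι 𝕜 : Type*} [Field 𝕜] (F : Finset ι) (p v : ι → 𝕜)

lemma sum_div_sum_mul_le [LinearOrder 𝕜] [IsStrictOrderedRing 𝕜] (hp : ∀ k ∈ F, 0 ≤ p k)
    {M : 𝕜} (hM : 0 ≤ M) (hv : ∀ k ∈ F, v k ≤ M) : ∑ k ∈ F, (p k / ∑ l ∈ F, p l) * v k ≤ M := by
  rcases (sum_nonneg hp).eq_or_lt with hP | hP
  · simpa [← hP] using hM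
  calc ∑ k ∈ F, (p k / ∑ l ∈ F, p l) * v k ≤ ∑ k ∈ F, (p k / ∑ l ∈ F, p l) * M :=
        sum_le_sum fun k hk => mul_le_mul_of_nonneg_left (hv k hk) (div_nonneg (hp k hk) hP.le)
    _ = M := by rw [← sum_mul, ← sum_div, div_self hP.ne', one_mul]

lemma sum_div_sum_mul_eq_of_support {a : ι} (ha : a ∈ F) (hpa : p a ≠ 0)
    (hp : ∀ k ∈ F, k ≠ a → p k = 0) : ∑ k ∈ F, (p k / ∑ l ∈ F, p l) * v k = v a := by
  rw [sum_eq_single_of_mem a ha hp,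
    sum_eq_single_of_mem a ha fun k hk hka => by simp [hp k hk hka], div_self hpa, one_mul]

end WeightedAverage

lemma eq_zero_of_sum_range_eq_one_of_add_eq_one {t s : ℕ} {p : ℕ → ℝ} (hp : ∀ k, 0 ≤ p k)
    (hsum : ∑ k ∈ range (t + 1), p k = 1) (hst : s < t) (hpair : p s + p (s + 1) = 1)
    {k : ℕ} (hkt : k ≤ t) (hks : k ≠ s) (hks' : k ≠ s + 1) : p k = 0 := by
  have hsub : ({s, s + 1} : Finset ℕ) ⊆ range (t + 1) := by
    intro x hx
    simp only [mem_insert, mem_singleton] at hx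
    rw [mem_range]; omega
  have hrest : ∑ k ∈ range (t + 1) \ {s, s + 1}, p k = 0 := by
    have := sum_sdiff (f := p) hsub
    rw [sum_pair (by omega), hpair, hsum] at this
    linarith
  refine (sum_eq_zero_iff_of_nonneg fun k _ => hp k).1 hrest k ?_
  simp only [mem_sdiff, mem_range, mem_insert, mem_singleton]
  omega

section ErrorProbability

variable {N t : ℕ} (X : Fin t → Fin N → Bool) {s : ℕ} (T : ℕ)

lemma epsWDR_le (hst : s < t) {p : ℕ → ℝ} (hp : ∀ k, 0 ≤ p k) :
    epsWDR X s T p ≤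
      max ((#(B1 X s T) : ℝ) / t.choose s) (#(B2 X (s + 1) T) / t.choose (s + 1)) :=
  max_le_max
    (sum_div_sum_mul_le _ _ _ (fun k _ => hp k) (by positivity) fun k hk =>
      card_B1_div_choose_le X (Nat.lt_succ_iff.1 (mem_range.1 hk)) hst.le)
    (sum_div_sum_mul_le _ _ _ (fun k _ => hp k) (by positivity) fun k hk =>
      antitone_card_B2_div_choose X T (mem_Icc.1 hk).1)

lemma epsWDR_eq_of_add_eq_one (hst : s < t) {p : ℕ → ℝ} (hp : ∀ k, 0 ≤ p k)
    (hsum : ∑ k ∈ range (t + 1), p k = 1) (hps : p s ≠ 0) (hps' : p (s + 1) ≠ 0)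
    (hpair : p s + p (s + 1) = 1) :
    epsWDR X s T p =
      max ((#(B1 X s T) : ℝ) / t.choose s) (#(B2 X (s + 1) T) / t.choose (s + 1)) := by
  have hzero {k : ℕ} (hkt : k ≤ t) (hks : k ≠ s) (hks' : k ≠ s + 1) : p k = 0 :=
    eq_zero_of_sum_range_eq_one_of_add_eq_one hp hsum hst hpair hkt hks hks'
  rw [epsWDR, sum_div_sum_mul_eq_of_support _ _ _ (self_mem_range_succ s) hps fun k hk hks =>
      have := mem_range.1 hk; hzero (by omega) hks (by omega),
    sum_div_sum_mul_eq_of_support _ _ _ (mem_Icc.2 ⟨le_rfl, hst⟩) hps' fun k hk hks =>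
      have := mem_Icc.1 hk; hzero this.2 (by omega) hks]

end ErrorProbability

theorem stmt_1_general {N t : ℕ} (X : Fin t → Fin N → Bool) (s : ℕ) (hst : s < t) (τ : ℝ) :
    (∀ p : ℕ → ℝ, (∀ k, 0 ≤ p k) → (∑ k ∈ Finset.range (t + 1), p k) = 1 →
      epsWDR X s ⌊τ * N⌋₊ p ≤
        max (((B1 X s ⌊τ * N⌋₊).card : ℝ) / (t.choose s : ℝ))
          (((B2 X (s + 1) ⌊τ * N⌋₊).card : ℝ) / (t.choose (s + 1) : ℝ))) ∧
    (∀ p : ℕ → ℝ, (∀ k, 0 ≤ p k) → (∑ k ∈ Finset.range (t + 1), p k) = 1 →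
      0 < p s → 0 < p (s + 1) → p s + p (s + 1) = 1 →
      epsWDR X s ⌊τ * N⌋₊ p =
        max (((B1 X s ⌊τ * N⌋₊).card : ℝ) / (t.choose s : ℝ))
          (((B2 X (s + 1) ⌊τ * N⌋₊).card : ℝ) / (t.choose (s + 1) : ℝ))) ∧
    (∀ p : ℕ → ℝ, (∀ k, 0 ≤ p k) → (∑ k ∈ Finset.range (t + 1), p k) = 1 →
      0 < p s → 0 < p (s + 1) → p s + p (s + 1) = 1 →
      ∀ p' : ℕ → ℝ, (∀ k, 0 ≤ p' k) → (∑ k ∈ Finset.range (t + 1), p' k) = 1 →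
        epsWDR X s ⌊τ * N⌋₊ p' ≤ epsWDR X s ⌊τ * N⌋₊ p) := by
  refine ⟨fun p hp _ => epsWDR_le X _ hst hp, fun p hp hsum hps hps' hpair =>
    epsWDR_eq_of_add_eq_one X _ hst hp hsum hps.ne' hps'.ne' hpair, ?_⟩
  intro p hp hsum hps hps' hpair p' hp' _
  rw [epsWDR_eq_of_add_eq_one X _ hst hp hsum hps.ne' hps'.ne' hpair]
  exact epsWDR_le X _ hst hp'

/-- the error probability of the `τ`-weight decision rule is at most
`max{|B¹_s(T,X)|/C(t,s), |B²_{s+1}(T,X)|/C(t,s+1)}` for every probability vector `p`,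
with equality when `p_s > 0`, `p_{s+1} > 0` and `p_s + p_{s+1} = 1`; consequently the
maximum over `p` is attained at any such `p`. -/
theorem stmt_1 {N t : ℕ} (X : Fin t → Fin N → Bool) (s : ℕ) (hs : 1 ≤ s) (hst : s < t)
    (τ : ℝ) (hτ0 : 0 < τ) (hτ1 : τ < 1) :
    (∀ p : ℕ → ℝ, (∀ k, 0 ≤ p k) → (∑ k ∈ Finset.range (t + 1), p k) = 1 →
      epsWDR X s ⌊τ * N⌋₊ p ≤
        max (((B1 X s ⌊τ * N⌋₊).card : ℝ) / (t.choose s : ℝ))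
          (((B2 X (s + 1) ⌊τ * N⌋₊).card : ℝ) / (t.choose (s + 1) : ℝ))) ∧
    (∀ p : ℕ → ℝ, (∀ k, 0 ≤ p k) → (∑ k ∈ Finset.range (t + 1), p k) = 1 →
      0 < p s → 0 < p (s + 1) → p s + p (s + 1) = 1 →
      epsWDR X s ⌊τ * N⌋₊ p =
        max (((B1 X s ⌊τ * N⌋₊).card : ℝ) / (t.choose s : ℝ))
          (((B2 X (s + 1) ⌊τ * N⌋₊).card : ℝ) / (t.choose (s + 1) : ℝ))) ∧
    (∀ p : ℕ → ℝ, (∀ k, 0 ≤ p k) → (∑ k ∈ Finset.range (t + 1), p k) = 1 →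
      0 < p s → 0 < p (s + 1) → p s + p (s + 1) = 1 →
      ∀ p' : ℕ → ℝ, (∀ k, 0 ≤ p' k) → (∑ k ∈ Finset.range (t + 1), p' k) = 1 →
        epsWDR X s ⌊τ * N⌋₊ p' ≤ epsWDR X s ⌊τ * N⌋₊ p) :=
  stmt_1_general X s hst τ
end

section
/- Let 1 ≤ s < t, let X be a binary N×t matrix, and let y ∈ {0,1}^N be such that n_s(y,X) > 0. Set β := n_s(y,X)/C(t,s). Then n_{s+1}(y,X) ≥ ( β^{(s+1)/s}·t/(t−s) − β·s/(t−s) )·C(t,s+1). -/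
def nresp {N t : ℕ} (X : Fin t → Fin N → Bool) (k : ℕ) (y : Fin N → Bool) : ℕ :=
  (Finset.univ.filter fun S : Finset (Fin t) => S.card = k ∧ resp X S = y).card

open Finset

theorem Nat.choose_mul_pow_le_choose_mul_pow {m t : ℕ} (s : ℕ) (hmt : m ≤ t) :
    m.choose s * t ^ s ≤ t.choose s * m ^ s := by
  have hfactor : ∀ i, (m - i) * t ≤ (t - i) * m := fun i =>
    calc (m - i) * t = m * t - i * t := Nat.sub_mul ..
      _ ≤ m * t - i * m := Nat.sub_le_sub_left (Nat.mul_le_mul_left i hmt) _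
      _ = (t - i) * m := by rw [Nat.sub_mul, Nat.mul_comm t]
  have hdesc : m.descFactorial s * t ^ s ≤ t.descFactorial s * m ^ s := by
    have hpow : ∀ n : ℕ, n ^ s = ∏ _i ∈ range s, n := fun n => by rw [prod_const, card_range]
    rw [Nat.descFactorial_eq_prod_range, Nat.descFactorial_eq_prod_range, hpow t, hpow m,
      ← prod_mul_distrib, ← prod_mul_distrib]
    exact prod_le_prod' fun i _ => hfactor i
  rw [Nat.descFactorial_eq_factorial_mul_choose, Nat.descFactorial_eq_factorial_mul_choose,
    mul_assoc, mul_assoc] at hdesc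
  exact Nat.le_of_mul_le_mul_left hdesc s.factorial_pos

theorem Nat.choose_div_choose_le_div_pow {K : Type*} [Field K] [LinearOrder K]
    [IsStrictOrderedRing K] {m t : ℕ} (s : ℕ) (hmt : m ≤ t) :
    (m.choose s : K) / t.choose s ≤ ((m : K) / t) ^ s := by
  rcases t.eq_zero_or_pos with rfl | ht
  · obtain rfl : m = 0 := Nat.le_zero.1 hmt
    rcases s with _ | s <;> simp
  refine div_le_of_le_mul₀ (by positivity) (by positivity) ?_
  rw [div_pow, div_mul_eq_mul_div, le_div_iff₀ (by positivity)]
  exact_mod_cast (Nat.choose_mul_pow_le_choose_mul_pow s hmt).trans_eq (Nat.mul_comm ..)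

theorem card_mul_sub_le_card_mul_of_insert_mem {α : Type*} [DecidableEq α] {J : Finset α}
    {𝒜 ℬ : Finset (Finset α)} {s : ℕ} (h𝒜 : ∀ A ∈ 𝒜, A ⊆ J ∧ #A = s)
    (hℬ : (ℬ : Set (Finset α)).Sized (s + 1)) (hins : ∀ A ∈ 𝒜, ∀ j ∈ J \ A, insert j A ∈ ℬ) :
    #𝒜 * (#J - s) ≤ #ℬ * (s + 1) := by
  refine card_mul_le_card_mul (· ⊆ ·) (fun A hA => ?_) (fun B hB => ?_)
  · obtain ⟨hAJ, hAs⟩ := h𝒜 A hA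
    have hinj : Set.InjOn (insert · A) (J \ A : Finset α) := (insert_inj_on A).mono fun j hj =>
      (mem_sdiff.1 hj).2
    calc #J - s = #(J \ A) := by rw [card_sdiff_of_subset hAJ, hAs]
      _ = #((J \ A).image (insert · A)) := (card_image_of_injOn hinj).symm
      _ ≤ #(ℬ.bipartiteAbove (· ⊆ ·) A) := card_le_card <| image_subset_iff.2 fun j hj =>
          (mem_bipartiteAbove _).2 ⟨hins A hA j hj, subset_insert _ _⟩
  · calc #(𝒜.bipartiteBelow (· ⊆ ·) B) ≤ #(B.powersetCard s) := card_le_card fun A hA => by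
          obtain ⟨hA𝒜, hAB⟩ := (mem_bipartiteBelow _).1 hA
          exact mem_powersetCard.2 ⟨hAB, (h𝒜 A hA𝒜).2⟩
      _ = s + 1 := by rw [card_powersetCard, hℬ hB, Nat.choose_succ_self_right]

section Response

variable {N t : ℕ} (X : Fin t → Fin N → Bool) (y : Fin N → Bool)

theorem resp_eq_sup (S : Finset (Fin t)) : resp X S = S.sup X := by
  ext i
  rw [Finset.sup_apply]
  induction S using cons_induction with
  | empty => simp [resp]
  | cons j S hj ih => simp [resp, ← ih]

def colsBelow : Finset (Fin t) := {j | ∀ i, X j i ≤ y i}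

variable {X y}

theorem subset_colsBelow {S : Finset (Fin t)} (h : resp X S = y) : S ⊆ colsBelow X y := by
  intro j hj
  rw [resp_eq_sup] at h
  exact mem_filter.2 ⟨mem_univ j, h ▸ le_sup (f := X) hj⟩

theorem resp_insert_of_mem_colsBelow {S : Finset (Fin t)} {j : Fin t} (h : resp X S = y)
    (hj : j ∈ colsBelow X y) : resp X (insert j S) = y := by
  rw [resp_eq_sup, sup_insert, ← resp_eq_sup, h]
  exact sup_eq_right.2 (mem_filter.1 hj).2

variable (X y)

theorem nresp_le_choose (s : ℕ) : nresp X s y ≤ (#(colsBelow X y)).choose s := by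
  rw [nresp, ← card_powersetCard]
  refine card_le_card fun S hS => ?_
  obtain ⟨hcard, hresp⟩ := (mem_filter.1 hS).2
  exact mem_powersetCard.2 ⟨subset_colsBelow hresp, hcard⟩

theorem nresp_mul_sub_le (s : ℕ) :
    nresp X s y * (#(colsBelow X y) - s) ≤ nresp X (s + 1) y * (s + 1) := by
  unfold nresp
  refine card_mul_sub_le_card_mul_of_insert_mem (fun S hS => ?_) (fun S hS => ?_)
    (fun S hS j hj => ?_)
  · obtain ⟨hcard, hresp⟩ := (mem_filter.1 hS).2
    exact ⟨subset_colsBelow hresp, hcard⟩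
  · exact (mem_filter.1 hS).2.1
  · obtain ⟨hcard, hresp⟩ := (mem_filter.1 hS).2
    obtain ⟨hjJ, hjS⟩ := mem_sdiff.1 hj
    exact mem_filter.2 ⟨mem_univ _, by rw [card_insert_of_notMem hjS, hcard],
      resp_insert_of_mem_colsBelow hresp hjJ⟩

theorem nresp_div_choose_le (s : ℕ) :
    (nresp X s y : ℝ) / t.choose s ≤ ((#(colsBelow X y) : ℝ) / t) ^ s := by
  have hcols : #(colsBelow X y) ≤ t := (card_le_univ _).trans_eq (Fintype.card_fin t)
  exact (div_le_div_of_nonneg_right (by exact_mod_cast nresp_le_choose X y s) (by positivity)).trans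
    (Nat.choose_div_choose_le_div_pow s hcols)

end Response

/-- if `n_s(y,X) > 0` and `β = n_s(y,X)/C(t,s)`, then
`n_{s+1}(y,X) ≥ (β^{(s+1)/s}·t/(t−s) − β·s/(t−s))·C(t,s+1)`. -/
theorem stmt_6 {N t : ℕ} (s : ℕ) (hs : 1 ≤ s) (hst : s < t)
    (X : Fin t → Fin N → Bool) (y : Fin N → Bool) (hpos : 0 < nresp X s y) :
    (((nresp X s y : ℝ) / (t.choose s : ℝ)) ^ (((s : ℝ) + 1) / (s : ℝ))
          * (t : ℝ) / ((t : ℝ) - (s : ℝ))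
        - ((nresp X s y : ℝ) / (t.choose s : ℝ)) * (s : ℝ) / ((t : ℝ) - (s : ℝ)))
        * (t.choose (s + 1) : ℝ) ≤
      (nresp X (s + 1) y : ℝ) := by
  set m := #(colsBelow X y)
  set β := (nresp X s y : ℝ) / t.choose s
  have hc : (0 : ℝ) < t.choose s := by exact_mod_cast Nat.choose_pos hst.le
  have hβ : 0 < β := div_pos (by exact_mod_cast hpos) hc
  have hsm : s ≤ m := le_of_not_gt fun h =>
    (hpos.trans_le (nresp_le_choose X y s)).ne' (Nat.choose_eq_zero_of_lt h)
  have hs0 : (0 : ℝ) < s := by exact_mod_cast hs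
  have ht : (0 : ℝ) < t := by exact_mod_cast Nat.zero_lt_of_lt hst
  have hts : (0 : ℝ) < t - s := sub_pos.2 (by exact_mod_cast hst)
  have hroot : β ^ (s : ℝ)⁻¹ * t ≤ m := by
    rw [← le_div_iff₀ ht, Real.rpow_inv_le_iff_of_pos hβ.le (by positivity) hs0,
      Real.rpow_natCast]
    exact nresp_div_choose_le X y s
  have hpow : β ^ (((s : ℝ) + 1) / s) = β * β ^ (s : ℝ)⁻¹ := by
    rw [add_div, div_self hs0.ne', Real.rpow_add hβ, Real.rpow_one, one_div]
  have hpascal : (t.choose (s + 1) : ℝ) * (s + 1) = t.choose s * (t - s) := by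
    have h := congrArg (Nat.cast : ℕ → ℝ) (Nat.choose_succ_right_eq t s)
    push_cast [Nat.cast_sub hst.le] at h
    exact h
  have hcount : (nresp X s y : ℝ) * (m - s) ≤ nresp X (s + 1) y * (s + 1) := by
    exact_mod_cast nresp_mul_sub_le X y s
  rw [hpow]
  calc _ = (nresp X s y : ℝ) * (β ^ (s : ℝ)⁻¹ * t - s) / (s + 1) := by
        have hβc : β * t.choose s = nresp X s y := div_mul_cancel₀ _ hc.ne'
        field_simp
        linear_combination (β * (β ^ (1 / (s : ℝ)) * t - s)) * hpascal
          + ((t - s) * (β ^ (1 / (s : ℝ)) * t - s)) * hβc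
    _ ≤ (nresp X s y : ℝ) * (m - s) / (s + 1) := by gcongr
    _ ≤ _ := by rw [div_le_iff₀ (by positivity)]; exact hcount
end

section
/- Let k ≥ 2 be an integer and 0 < Q < 1. As a function of q, A(k,Q,q) is strictly decreasing on the interval (Q, 1−(1−Q)^k], strictly increasing on the interval [1−(1−Q)^k, min{1, kQ}), and equals 0 at the point q = 1−(1−Q)^k. -/
/-- `y(k,Q,q)`: the unique root `y ∈ (0,1)` of `q = Q(1−y^k)/(1−y)` (realized as the
supremum of the solution set, which is a singleton in the considered range). -/
noncomputable def rootY (k : ℕ) (Q q : ℝ) : ℝ :=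
  sSup {y : ℝ | y ∈ Set.Ioo (0 : ℝ) 1 ∧ q = Q * (1 - y ^ k) / (1 - y)}

/-- Binary entropy `h(Q) = −Q log₂ Q − (1−Q) log₂(1−Q)`. -/
noncomputable def binH (Q : ℝ) : ℝ :=
  -Q * Real.logb 2 Q - (1 - Q) * Real.logb 2 (1 - Q)

/-- `A(k,Q,q) = (1−q)log₂(1−q) + q log₂[Q y^k/(1−y)] + kQ log₂[(1−y)/y] + k·h(Q)`,
where `y = y(k,Q,q)` is the unique root of `q = Q(1−y^k)/(1−y)` in `(0,1)`. -/
noncomputable def funA (k : ℕ) (Q q : ℝ) : ℝ :=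
  (1 - q) * Real.logb 2 (1 - q)
    + q * Real.logb 2 (Q * rootY k Q q ^ k / (1 - rootY k Q q))
    + (k : ℝ) * Q * Real.logb 2 ((1 - rootY k Q q) / rootY k Q q)
    + (k : ℝ) * binH Q

/-!
Parametrize `q` by its root: `q(y) = Q(1 + y + ⋯ + y^(k-1))` is strictly increasing on `[0, 1)`,
so it suffices to study `Ψ(y) = A(k, Q, q(y))`. Differentiating in `y`, the terms coming from the
explicit `y`-dependence cancel (because `q'(y) y (1 - y) = q y - kQ y^k`), leaving
`Ψ'(y) = q'(y) · log₂ (Q y^k / ((1 - y)(1 - q)))`. As `(1 - y)(1 - q) = Q y^k + (1 - Q - y)`, the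
logarithm has the sign of `y - (1 - Q)`, and at `y = 1 - Q` we get `q = 1 - (1 - Q)^k`, `Ψ = 0`.
-/

open Real Set

section Transfer

variable {α β γ : Type*} [LinearOrder α] [Preorder β] [Preorder γ]
  {f : α → β} {g : β → γ} {s : Set α} {t : Set β}

theorem StrictMonoOn.strictAntiOn_of_comp (hf : StrictMonoOn f s) (hft : SurjOn f s t)
    (hgf : StrictAntiOn (g ∘ f) s) : StrictAntiOn g t := by
  intro _ hx _ hy hxy
  obtain ⟨a, ha, rfl⟩ := hft hx
  obtain ⟨b, hb, rfl⟩ := hft hy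
  exact hgf ha hb ((hf.lt_iff_lt ha hb).mp hxy)

theorem StrictMonoOn.strictMonoOn_of_comp (hf : StrictMonoOn f s) (hft : SurjOn f s t)
    (hgf : StrictMonoOn (g ∘ f) s) : StrictMonoOn g t := by
  intro _ hx _ hy hxy
  obtain ⟨a, ha, rfl⟩ := hft hx
  obtain ⟨b, hb, rfl⟩ := hft hy
  exact hgf ha hb ((hf.lt_iff_lt ha hb).mp hxy)

end Transfer

/-- `Q(1 - y^k)/(1 - y)` in the polynomial form `Q(1 + y + ⋯ + y^(k-1))`, defined also at `y = 1`. -/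
noncomputable def qOfY (k : ℕ) (Q y : ℝ) : ℝ := Q * ∑ i ∈ Finset.range k, y ^ i

noncomputable def derivQOfY (k : ℕ) (Q y : ℝ) : ℝ :=
  Q * ∑ i ∈ Finset.range k, (i : ℝ) * y ^ (i - 1)

section QOfY

variable {k : ℕ} {Q : ℝ}

theorem qOfY_mul_one_sub (y : ℝ) : qOfY k Q y * (1 - y) = Q * (1 - y ^ k) := by
  rw [qOfY, mul_assoc, geom_sum_mul_neg]

theorem qOfY_eq_div {y : ℝ} (hy : y ≠ 1) : qOfY k Q y = Q * (1 - y ^ k) / (1 - y) := by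
  rw [eq_div_iff (sub_ne_zero.mpr hy.symm), qOfY_mul_one_sub]

theorem qOfY_zero (hk : k ≠ 0) : qOfY k Q 0 = Q := by
  simp [qOfY, zero_pow_eq, hk]

theorem qOfY_one : qOfY k Q 1 = k * Q := by
  simp [qOfY, mul_comm]

theorem qOfY_one_sub (hQ : Q ≠ 0) : qOfY k Q (1 - Q) = 1 - (1 - Q) ^ k :=
  mul_right_cancel₀ hQ (by simpa [mul_comm Q] using qOfY_mul_one_sub (k := k) (Q := Q) (1 - Q))

theorem continuous_qOfY : Continuous (qOfY k Q) := by
  unfold qOfY; fun_prop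

theorem strictMonoOn_qOfY (hk : 2 ≤ k) (hQ : 0 < Q) : StrictMonoOn (qOfY k Q) (Ici 0) := by
  intro a ha b hb hab
  refine mul_lt_mul_of_pos_left (Finset.sum_lt_sum (fun i _ => pow_le_pow_left₀ ha hab.le i)
    ⟨1, Finset.mem_range.mpr hk, by simpa using hab⟩) hQ

theorem hasDerivAt_qOfY (y : ℝ) : HasDerivAt (qOfY k Q) (derivQOfY k Q y) y :=
  (HasDerivAt.fun_sum fun i _ => hasDerivAt_pow i y).const_mul Q

theorem derivQOfY_pos (hk : 2 ≤ k) (hQ : 0 < Q) {y : ℝ} (hy : 0 ≤ y) :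
    0 < derivQOfY k Q y := by
  refine mul_pos hQ (lt_of_lt_of_le one_pos ?_)
  convert Finset.single_le_sum (f := fun i : ℕ => (i : ℝ) * y ^ (i - 1))
    (fun i _ => by positivity) (Finset.mem_range.mpr hk) using 1
  simp

theorem derivQOfY_mul (hk : k ≠ 0) (y : ℝ) :
    derivQOfY k Q y * (y * (1 - y)) = qOfY k Q y * y - k * Q * y ^ k := by
  have hl : HasDerivAt (fun z => qOfY k Q z * (1 - z))
      (derivQOfY k Q y * (1 - y) - qOfY k Q y) y := by
    simpa [← sub_eq_add_neg] using (hasDerivAt_qOfY y).fun_mul ((hasDerivAt_id y).const_sub 1)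
  have hr := ((hasDerivAt_pow k y).const_sub 1).const_mul Q
  rw [funext qOfY_mul_one_sub] at hl
  have h := hl.unique hr
  rw [← pow_sub_one_mul hk]
  linear_combination y * h

theorem rootY_qOfY (hk : 2 ≤ k) (hQ : 0 < Q) {y : ℝ} (hy : y ∈ Ioo 0 1) :
    rootY k Q (qOfY k Q y) = y := by
  suffices {z : ℝ | z ∈ Ioo 0 1 ∧ qOfY k Q y = Q * (1 - z ^ k) / (1 - z)} = {y} by
    rw [rootY, this, csSup_singleton]
  ext z
  refine ⟨fun ⟨hz, hzy⟩ => ?_, ?_⟩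
  · rw [← qOfY_eq_div hz.2.ne] at hzy
    exact (strictMonoOn_qOfY hk hQ).injOn (mem_Ici.mpr hz.1.le) (mem_Ici.mpr hy.1.le) hzy.symm
  · rintro rfl
    exact ⟨hy, qOfY_eq_div hy.2.ne⟩

theorem qOfY_lt_one (hk : 2 ≤ k) (hQ0 : 0 < Q) (hQ1 : Q < 1) {y : ℝ}
    (hy : y ∈ Icc 0 (1 - Q)) : qOfY k Q y < 1 := by
  calc qOfY k Q y ≤ qOfY k Q (1 - Q) :=
        (strictMonoOn_qOfY hk hQ0).monotoneOn hy.1 (by simp; linarith) hy.2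
    _ < 1 := by rw [qOfY_one_sub hQ0.ne']; linarith [pow_pos (sub_pos.mpr hQ1) k]

theorem surjOn_qOfY_Ioc (hk : k ≠ 0) (hQ0 : 0 < Q) (hQ1 : Q < 1) :
    SurjOn (qOfY k Q) (Ioc 0 (1 - Q)) (Ioc Q (1 - (1 - Q) ^ k)) := by
  have h := intermediate_value_Ioc (sub_nonneg.mpr hQ1.le)
    (continuous_qOfY (k := k) (Q := Q)).continuousOn
  rwa [qOfY_zero hk, qOfY_one_sub hQ0.ne'] at h

theorem surjOn_qOfY_Ico (hQ0 : 0 < Q) :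
    SurjOn (qOfY k Q) {y | y ∈ Ico (1 - Q) 1 ∧ qOfY k Q y < 1}
      (Ico (1 - (1 - Q) ^ k) (min 1 (k * Q))) := by
  intro q ⟨hq, hqmin⟩
  have hq' : q ∈ Ico (qOfY k Q (1 - Q)) (qOfY k Q 1) := by
    rw [qOfY_one_sub hQ0.ne', qOfY_one]
    exact ⟨hq, hqmin.trans_le (min_le_right _ _)⟩
  obtain ⟨y, hy, rfl⟩ := intermediate_value_Ico (by linarith) continuous_qOfY.continuousOn hq'
  exact ⟨y, ⟨hy, hqmin.trans_le (min_le_left _ _)⟩, rfl⟩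

theorem one_sub_mul_one_sub_qOfY (y : ℝ) :
    (1 - y) * (1 - qOfY k Q y) = Q * y ^ k + (1 - Q - y) := by
  linear_combination (-1 : ℝ) * qOfY_mul_one_sub (k := k) (Q := Q) y

end QOfY

/-- `A(k, Q, ·)` in the root variable `y`, with the logarithms expanded. -/
noncomputable def funAOfY (k : ℕ) (Q y : ℝ) : ℝ :=
  ((1 - qOfY k Q y) * log (1 - qOfY k Q y) + qOfY k Q y * log Q
      + k * (qOfY k Q y - Q) * log y + (k * Q - qOfY k Q y) * log (1 - y)) / log 2
    + k * binH Q

section FunAOfY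

variable {k : ℕ} {Q : ℝ}

theorem funA_qOfY (hk : 2 ≤ k) (hQ : 0 < Q) {y : ℝ} (hy : y ∈ Ioo 0 1) :
    funA k Q (qOfY k Q y) = funAOfY k Q y := by
  have h1y : 1 - y ≠ 0 := (sub_pos.mpr hy.2).ne'
  rw [funA, funAOfY, rootY_qOfY hk hQ hy, logb, logb, logb,
    log_div (mul_pos hQ (pow_pos hy.1 k)).ne' h1y, log_mul hQ.ne' (pow_pos hy.1 k).ne', log_pow,
    log_div h1y hy.1.ne']
  ring

theorem hasDerivAt_funAOfY (hk : k ≠ 0) (hQ : Q ≠ 0) {y : ℝ} (hy0 : 0 < y) (hy1 : y < 1)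
    (hq : qOfY k Q y < 1) :
    HasDerivAt (funAOfY k Q)
      (derivQOfY k Q y * log (Q * y ^ k / ((1 - y) * (1 - qOfY k Q y))) / log 2) y := by
  have h1y : 1 - y ≠ 0 := (sub_pos.mpr hy1).ne'
  have h1q : 1 - qOfY k Q y ≠ 0 := (sub_pos.mpr hq).ne'
  have hq' := hasDerivAt_qOfY (k := k) (Q := Q) y
  have h1 := (hq'.const_sub 1).fun_mul ((hq'.const_sub 1).log h1q)
  have h2 := hq'.mul_const (log Q)
  have h3 := ((hq'.sub_const Q).const_mul (k : ℝ)).fun_mul (hasDerivAt_log hy0.ne')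
  have h4 := (hq'.const_sub (k * Q)).fun_mul (((hasDerivAt_id y).const_sub 1).log h1y)
  refine ((((h1.add h2).add h3).add h4).div_const (log 2)).add_const (k * binH Q)
    |>.congr_deriv ?_
  simp only [id]
  rw [log_div (mul_ne_zero hQ (pow_pos hy0 k).ne') (mul_ne_zero h1y h1q),
    log_mul hQ (pow_pos hy0 k).ne', log_mul h1y h1q, log_pow]
  field_simp
  linear_combination (-1 : ℝ) * derivQOfY_mul (Q := Q) hk y
    + k * qOfY_mul_one_sub (k := k) (Q := Q) y

theorem strictAntiOn_funAOfY (hk : 2 ≤ k) (hQ0 : 0 < Q) (hQ1 : Q < 1) :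
    StrictAntiOn (funAOfY k Q) (Ioc 0 (1 - Q)) := by
  have hd (y : ℝ) (hy : y ∈ Ioc 0 (1 - Q)) := hasDerivAt_funAOfY (by omega) hQ0.ne' hy.1
    (by linarith [hy.2]) (qOfY_lt_one hk hQ0 hQ1 ⟨hy.1.le, hy.2⟩)
  refine strictAntiOn_of_deriv_neg (convex_Ioc 0 (1 - Q))
    (fun y hy => (hd y hy).continuousAt.continuousWithinAt) fun y hy => ?_
  rw [interior_Ioc] at hy
  rw [(hd y (Ioo_subset_Ioc_self hy)).deriv]
  have hden := one_sub_mul_one_sub_qOfY (k := k) (Q := Q) y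
  have hnum : 0 < Q * y ^ k := mul_pos hQ0 (pow_pos hy.1 k)
  refine div_neg_of_neg_of_pos (mul_neg_of_pos_of_neg (derivQOfY_pos hk hQ0 hy.1.le)
    (log_neg (div_pos hnum ?_) ((div_lt_one ?_).mpr ?_))) (log_pos one_lt_two) <;> linarith [hy.2]

theorem strictMonoOn_funAOfY (hk : 2 ≤ k) (hQ0 : 0 < Q) (hQ1 : Q < 1) :
    StrictMonoOn (funAOfY k Q) {y | y ∈ Ico (1 - Q) 1 ∧ qOfY k Q y < 1} := by
  set S := {y | y ∈ Ico (1 - Q) 1 ∧ qOfY k Q y < 1}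
  have hS : S.OrdConnected := ⟨fun a ha b hb z hz =>
    ⟨⟨ha.1.1.trans hz.1, hz.2.trans_lt hb.1.2⟩,
      ((strictMonoOn_qOfY hk hQ0).monotoneOn (mem_Ici.mpr (by linarith [ha.1.1, hz.1]))
        (mem_Ici.mpr (by linarith [hb.1.1])) hz.2).trans_lt hb.2⟩⟩
  have hd (y : ℝ) (hy : y ∈ S) := hasDerivAt_funAOfY (by omega) hQ0.ne' (by linarith [hy.1.1])
    hy.1.2 hy.2
  refine strictMonoOn_of_deriv_pos hS.convex
    (fun y hy => (hd y hy).continuousAt.continuousWithinAt) fun y hy => ?_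
  have hyQ : 1 - Q < y := by
    simpa using interior_mono (fun z (hz : z ∈ S) => mem_Ici.mpr hz.1.1) hy
  obtain ⟨⟨-, hy1⟩, hq⟩ := interior_subset hy
  rw [(hd y (interior_subset hy)).deriv]
  have hden := one_sub_mul_one_sub_qOfY (k := k) (Q := Q) y
  have hnum : 0 < Q * y ^ k := mul_pos hQ0 (pow_pos (by linarith) k)
  exact div_pos (mul_pos (derivQOfY_pos hk hQ0 (by linarith))
    (log_pos ((one_lt_div (mul_pos (by linarith) (by linarith))).mpr (by linarith))))
    (log_pos one_lt_two)

theorem funAOfY_one_sub (hQ : Q ≠ 0) : funAOfY k Q (1 - Q) = 0 := by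
  rw [funAOfY, qOfY_one_sub hQ, binH, logb, logb]
  simp only [sub_sub_cancel, log_pow]
  field_simp
  ring

end FunAOfY

/-- for `k ≥ 2` and `0 < Q < 1`, the function `q ↦ A(k,Q,q)` is strictly
decreasing on `(Q, 1−(1−Q)^k]`, strictly increasing on `[1−(1−Q)^k, min{1,kQ})`, and
vanishes at `q = 1−(1−Q)^k`. -/
theorem stmt_11 (k : ℕ) (hk : 2 ≤ k) (Q : ℝ) (hQ0 : 0 < Q) (hQ1 : Q < 1) :
    StrictAntiOn (fun q => funA k Q q) (Set.Ioc Q (1 - (1 - Q) ^ k)) ∧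
    StrictMonoOn (fun q => funA k Q q) (Set.Ico (1 - (1 - Q) ^ k) (min 1 ((k : ℝ) * Q))) ∧
    funA k Q (1 - (1 - Q) ^ k) = 0 := by
  have hq := strictMonoOn_qOfY hk hQ0
  have hA : EqOn (funAOfY k Q) (funA k Q ∘ qOfY k Q) (Ioo 0 1) :=
    fun y hy => (funA_qOfY hk hQ0 hy).symm
  refine ⟨?_, ?_, ?_⟩
  · have hs : Ioc 0 (1 - Q) ⊆ Ioo 0 1 := Ioc_subset_Ioo_right (by linarith)
    exact (hq.mono fun y hy => mem_Ici.mpr (hs hy).1.le).strictAntiOn_of_comp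
      (surjOn_qOfY_Ioc (by omega) hQ0 hQ1)
      ((strictAntiOn_funAOfY hk hQ0 hQ1).congr (hA.mono hs))
  · have hs : {y | y ∈ Ico (1 - Q) 1 ∧ qOfY k Q y < 1} ⊆ Ioo 0 1 :=
      fun y hy => ⟨by linarith [hy.1.1], hy.1.2⟩
    exact (hq.mono fun y hy => mem_Ici.mpr (hs hy).1.le).strictMonoOn_of_comp
      (surjOn_qOfY_Ico hQ0) ((strictMonoOn_funAOfY hk hQ0 hQ1).congr (hA.mono hs))
  · rw [← qOfY_one_sub hQ0.ne', ← Function.comp_apply (f := funA k Q),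
      ← hA ⟨by linarith, by linarith⟩, funAOfY_one_sub hQ0.ne']
end

section
/- Let k ≥ 2 be an integer and 0 < q < 1. As a function of Q, A(k,Q,q) is strictly decreasing on the interval (q/k, 1−(1−q)^{1/k}], strictly increasing on the interval [1−(1−q)^{1/k}, q), and equals 0 at the point Q = 1−(1−q)^{1/k}. -/
open Real Set Topology

theorem strictAntiOn_of_strictMonoOn_comp {α β γ : Type*} [LinearOrder α] [LinearOrder β]
    [Preorder γ] {φ : α → β} {f : β → γ} {s : Set α} {t : Set β} (hφ : StrictAntiOn φ s)
    (hts : t ⊆ φ '' s) (hf : StrictMonoOn (f ∘ φ) s) : StrictAntiOn f t := by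
  intro a ha b hb hab
  obtain ⟨x, hx, rfl⟩ := hts ha
  obtain ⟨y, hy, rfl⟩ := hts hb
  exact hf hy hx ((hφ.lt_iff_gt hx hy).1 hab)

theorem strictMonoOn_of_strictAntiOn_comp {α β γ : Type*} [LinearOrder α] [LinearOrder β]
    [Preorder γ] {φ : α → β} {f : β → γ} {s : Set α} {t : Set β} (hφ : StrictAntiOn φ s)
    (hts : t ⊆ φ '' s) (hf : StrictAntiOn (f ∘ φ) s) : StrictMonoOn f t :=
  strictAntiOn_of_strictMonoOn_comp (γ := γᵒᵈ) hφ hts hf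

section GeomSum

variable {k : ℕ} {y : ℝ}

theorem geom_sum_strictMonoOn (hk : 2 ≤ k) :
    StrictMonoOn (fun y : ℝ => ∑ i ∈ Finset.range k, y ^ i) (Ici 0) := by
  intro a ha b _ hab
  refine Finset.sum_lt_sum (fun i _ => pow_le_pow_left₀ ha hab.le i) ⟨1, ?_, by simpa using hab⟩
  simp only [Finset.mem_range]
  omega

theorem natCast_mul_pow_pred_lt_geom_sum (hk : 2 ≤ k) (hy0 : 0 ≤ y) (hy1 : y < 1) :
    k * y ^ (k - 1) < ∑ i ∈ Finset.range k, y ^ i := by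
  calc (k : ℝ) * y ^ (k - 1) = ∑ _i ∈ Finset.range k, y ^ (k - 1) := by simp
    _ < ∑ i ∈ Finset.range k, y ^ i := by
      refine Finset.sum_lt_sum (fun i hi => pow_le_pow_of_le_one hy0 hy1.le ?_) ⟨0, ?_, ?_⟩
      · have := Finset.mem_range.1 hi; omega
      · simp only [Finset.mem_range]; omega
      · simpa using pow_lt_one₀ hy0 hy1 (by omega : k - 1 ≠ 0)

theorem geom_sum_eq_one_sub_div (hy : y ≠ 1) :
    ∑ i ∈ Finset.range k, y ^ i = (1 - y ^ k) / (1 - y) :=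
  eq_div_of_mul_eq (sub_ne_zero.2 hy.symm) (by rw [mul_comm, mul_neg_geom_sum])

end GeomSum

theorem binH_eq_binEntropy_div_log_two (p : ℝ) : binH p = binEntropy p / log 2 := by
  simp only [binH, binEntropy, logb, log_inv]
  ring

section RootYInv

variable {k : ℕ} {q y ys : ℝ}

noncomputable def rootYInv (k : ℕ) (q y : ℝ) : ℝ := q / ∑ i ∈ Finset.range k, y ^ i

theorem rootYInv_eq (hy : y < 1) : rootYInv k q y = q * (1 - y) / (1 - y ^ k) := by
  rw [rootYInv, geom_sum_eq_one_sub_div hy.ne, div_div_eq_mul_div]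

theorem rootYInv_zero (hk : k ≠ 0) : rootYInv k q 0 = q := by
  simp [rootYInv, hk]

theorem rootYInv_one : rootYInv k q 1 = q / k := by
  simp [rootYInv]

theorem rootYInv_strictAntiOn (hk : 2 ≤ k) (hq : 0 < q) : StrictAntiOn (rootYInv k q) (Ici 0) :=
  fun a ha _ _ hab => div_lt_div_of_pos_left hq (geom_sum_pos ha (by omega))
    (geom_sum_strictMonoOn hk ha ‹_› hab)

theorem continuousOn_rootYInv (hk : k ≠ 0) : ContinuousOn (rootYInv k q) (Ici 0) :=
  continuousOn_const.div (by fun_prop) fun _ hy => (geom_sum_pos hy hk).ne'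

theorem one_sub_sub_rootYInv (hk : k ≠ 0) (hy : y ∈ Ioo 0 1) :
    1 - y - rootYInv k q y = (1 - y) * (1 - y ^ k - q) / (1 - y ^ k) := by
  have : 0 < 1 - y ^ k := sub_pos.2 (pow_lt_one₀ hy.1.le hy.2 hk)
  rw [rootYInv_eq hy.2]
  field_simp

theorem rootY_rootYInv (hk : 2 ≤ k) (hq : q ≠ 0) (hy : y ∈ Ioo 0 1) :
    rootY k (rootYInv k q y) q = y := by
  have hsum : ∀ w ∈ Ioo (0 : ℝ) 1,
      rootYInv k q y * (1 - w ^ k) / (1 - w) = rootYInv k q y * ∑ i ∈ Finset.range k, w ^ i :=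
    fun w hw => by rw [geom_sum_eq_one_sub_div hw.2.ne, mul_div_assoc]
  have hpos : 0 < ∑ i ∈ Finset.range k, y ^ i := geom_sum_pos hy.1.le (by omega)
  suffices {w : ℝ | w ∈ Ioo 0 1 ∧ q = rootYInv k q y * (1 - w ^ k) / (1 - w)} = {y} by
    rw [rootY, this, csSup_singleton]
  ext w
  simp only [mem_ofPred_eq, mem_singleton_iff]
  constructor
  · rintro ⟨hw, h⟩
    rw [hsum w hw, rootYInv, div_mul_eq_mul_div, eq_div_iff hpos.ne', mul_right_inj' hq] at h
    exact (geom_sum_strictMonoOn hk).injOn hw.1.le hy.1.le h.symm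
  · rintro rfl
    exact ⟨hy, by rw [hsum w hy, rootYInv, div_mul_cancel₀ _ hpos.ne']⟩

theorem hasDerivAt_rootYInv (hk : k ≠ 0) (hy : y ∈ Ioo 0 1) :
    HasDerivAt (rootYInv k q)
      (q * (k * y ^ (k - 1) * (1 - y) - (1 - y ^ k)) / (1 - y ^ k) ^ 2) y := by
  have hden : 1 - y ^ k ≠ 0 := (sub_pos.2 (pow_lt_one₀ hy.1.le hy.2 hk)).ne'
  have hclosed : rootYInv k q =ᶠ[𝓝 y] fun z => q * (1 - z) / (1 - z ^ k) :=
    (eventually_lt_nhds hy.2).mono fun z hz => rootYInv_eq hz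
  have hquot := (((hasDerivAt_id' y).const_sub 1).const_mul q).div
    ((hasDerivAt_pow k y).const_sub 1) hden
  exact (hquot.congr_deriv (by ring)).congr_of_eventuallyEq hclosed

theorem rootYInv_deriv_neg (hk : 2 ≤ k) (hq : 0 < q) (hy : y ∈ Ioo 0 1) :
    q * (k * y ^ (k - 1) * (1 - y) - (1 - y ^ k)) / (1 - y ^ k) ^ 2 < 0 := by
  have h := mul_lt_mul_of_pos_right
    (natCast_mul_pow_pred_lt_geom_sum hk hy.1.le hy.2) (sub_pos.2 hy.2)
  rw [geom_sum_eq_one_sub_div hy.2.ne, div_mul_cancel₀ _ (sub_pos.2 hy.2).ne'] at h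
  have hden : 0 < 1 - y ^ k := sub_pos.2 (pow_lt_one₀ hy.1.le hy.2 (by omega))
  exact div_neg_of_neg_of_pos (mul_neg_of_pos_of_neg hq (by linarith)) (pow_pos hden 2)

theorem rootYInv_mem_Ioo (hk : 2 ≤ k) (hq0 : 0 < q) (hq1 : q ≤ 1) (hy : y ∈ Ioo 0 1) :
    rootYInv k q y ∈ Ioo 0 1 := by
  refine ⟨div_pos hq0 (geom_sum_pos hy.1.le (by omega)), ?_⟩
  calc rootYInv k q y < rootYInv k q 0 :=
        rootYInv_strictAntiOn hk hq0 self_mem_Ici (mem_Ici.2 hy.1.le) hy.1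
    _ = q := rootYInv_zero (by omega)
    _ ≤ 1 := hq1

/-- `log 2 · (A(k, rootYInv k q y, q) − (1 − q) log₂ (1 − q))`, with the logarithms of products
split so that it can be differentiated termwise. -/
noncomputable def funANat (k : ℕ) (q y : ℝ) : ℝ :=
  q * log (rootYInv k q y) + k * q * log y - q * log (1 - y)
    + k * rootYInv k q y * (log (1 - y) - log y) + k * binEntropy (rootYInv k q y)

theorem funA_rootYInv (hk : 2 ≤ k) (hq0 : 0 < q) (hq1 : q ≤ 1) (hy : y ∈ Ioo 0 1) :
    funA k (rootYInv k q y) q = (1 - q) * logb 2 (1 - q) + funANat k q y / log 2 := by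
  have hφ := rootYInv_mem_Ioo hk hq0 hq1 hy
  have h1y : 1 - y ≠ 0 := (sub_pos.2 hy.2).ne'
  rw [funA, rootY_rootYInv hk hq0.ne' hy, binH_eq_binEntropy_div_log_two,
    logb_div (mul_ne_zero hφ.1.ne' (pow_ne_zero k hy.1.ne')) h1y, logb_mul hφ.1.ne'
    (pow_ne_zero k hy.1.ne'), logb_pow, logb_div h1y hy.1.ne']
  simp only [funANat, logb]
  ring

theorem hasDerivAt_funANat (hk : 2 ≤ k) (hq0 : 0 < q) (hq1 : q ≤ 1) (hy : y ∈ Ioo 0 1) :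
    HasDerivAt (funANat k q)
      (k * (q * (k * y ^ (k - 1) * (1 - y) - (1 - y ^ k)) / (1 - y ^ k) ^ 2)
        * log ((1 - y) * (1 - rootYInv k q y) / (y * rootYInv k q y))) y := by
  set φ := rootYInv k q
  set d := q * (k * y ^ (k - 1) * (1 - y) - (1 - y ^ k)) / (1 - y ^ k) ^ 2
  have hφ : HasDerivAt φ d y := hasDerivAt_rootYInv (by omega) hy
  obtain ⟨hφ0, hφ1⟩ := rootYInv_mem_Ioo hk hq0 hq1 hy
  have h1y : 0 < 1 - y := sub_pos.2 hy.2
  have hlog1y : HasDerivAt (fun z => log (1 - z)) (-1 / (1 - y)) y :=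
    ((hasDerivAt_id' y).const_sub 1).log h1y.ne'
  have hlogy : HasDerivAt log y⁻¹ y := hasDerivAt_log hy.1.ne'
  have hsum := ((((hφ.log hφ0.ne').const_mul q).add (hlogy.const_mul (k * q))).sub
    (hlog1y.const_mul q)).add ((hφ.const_mul (k : ℝ)).mul (hlog1y.sub hlogy)) |>.add
    (((hasDerivAt_binEntropy hφ0.ne' hφ1.ne).comp y hφ).const_mul (k : ℝ))
  have hcancel : q * (d / φ y) + k * q * y⁻¹ - q * (-1 / (1 - y))
      + k * φ y * (-1 / (1 - y) - y⁻¹) = 0 := by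
    have hden : 1 - y ^ k ≠ 0 := (sub_pos.2 (pow_lt_one₀ hy.1.le hy.2 (by omega))).ne'
    have hy0 : y ≠ 0 := hy.1.ne'
    obtain ⟨m, rfl⟩ : ∃ m, k = m + 1 := ⟨k - 1, by omega⟩
    simp only [φ, d, rootYInv_eq hy.2, Nat.add_sub_cancel]
    field_simp
    ring
  refine hsum.congr_deriv ?_
  rw [log_div (mul_pos h1y (sub_pos.2 hφ1)).ne' (mul_pos hy.1 hφ0).ne',
    log_mul h1y.ne' (sub_pos.2 hφ1).ne',
    log_mul hy.1.ne' hφ0.ne']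
  simp only [Pi.sub_apply]
  linear_combination hcancel

theorem hasDerivAt_funA_rootYInv (hk : 2 ≤ k) (hq0 : 0 < q) (hq1 : q ≤ 1) (hy : y ∈ Ioo 0 1) :
    HasDerivAt (fun y => funA k (rootYInv k q y) q)
      (k * (q * (k * y ^ (k - 1) * (1 - y) - (1 - y ^ k)) / (1 - y ^ k) ^ 2)
        * logb 2 ((1 - y) * (1 - rootYInv k q y) / (y * rootYInv k q y))) y := by
  have hnat : (fun y => funA k (rootYInv k q y) q)
      =ᶠ[𝓝 y] fun y => (1 - q) * logb 2 (1 - q) + funANat k q y / log 2 :=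
    Filter.eventually_of_mem (isOpen_Ioo.mem_nhds hy) fun z hz => funA_rootYInv hk hq0 hq1 hz
  refine HasDerivAt.congr_of_eventuallyEq ?_ hnat
  refine (((hasDerivAt_funANat hk hq0 hq1 hy).div_const (log 2)).const_add _).congr_deriv ?_
  rw [logb, mul_div_assoc]

theorem deriv_funA_rootYInv_neg (hk : 2 ≤ k) (hq0 : 0 < q) (hy : y ∈ Ioo 0 1)
    (hyq : y ^ k < 1 - q) : deriv (fun y => funA k (rootYInv k q y) q) y < 0 := by
  have hq1 : q ≤ 1 := by linarith [pow_pos hy.1 k]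
  rw [(hasDerivAt_funA_rootYInv hk hq0 hq1 hy).deriv]
  obtain ⟨hφ0, hφ1⟩ := rootYInv_mem_Ioo hk hq0 hq1 hy
  have hφ : 0 < 1 - y - rootYInv k q y := by
    rw [one_sub_sub_rootYInv (by omega) hy]
    have := pow_lt_one₀ hy.1.le hy.2 (by omega : k ≠ 0)
    exact div_pos (mul_pos (by linarith [hy.2]) (by linarith)) (by linarith)
  refine mul_neg_of_neg_of_pos (mul_neg_of_pos_of_neg (by positivity)
    (rootYInv_deriv_neg hk hq0 hy)) (logb_pos one_lt_two ?_)
  rw [one_lt_div (mul_pos hy.1 hφ0)]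
  nlinarith

theorem deriv_funA_rootYInv_pos (hk : 2 ≤ k) (hq0 : 0 < q) (hq1 : q ≤ 1) (hy : y ∈ Ioo 0 1)
    (hyq : 1 - q < y ^ k) : 0 < deriv (fun y => funA k (rootYInv k q y) q) y := by
  rw [(hasDerivAt_funA_rootYInv hk hq0 hq1 hy).deriv]
  obtain ⟨hφ0, hφ1⟩ := rootYInv_mem_Ioo hk hq0 hq1 hy
  have hφ : 1 - y - rootYInv k q y < 0 := by
    rw [one_sub_sub_rootYInv (by omega) hy]
    have := pow_lt_one₀ hy.1.le hy.2 (by omega : k ≠ 0)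
    exact div_neg_of_neg_of_pos (mul_neg_of_pos_of_neg (by linarith [hy.2]) (by linarith))
      (by linarith)
  refine mul_pos_of_neg_of_neg (mul_neg_of_pos_of_neg (by positivity)
    (rootYInv_deriv_neg hk hq0 hy)) (logb_neg one_lt_two
    (div_pos (mul_pos (sub_pos.2 hy.2) (sub_pos.2 hφ1)) (mul_pos hy.1 hφ0)) ?_)
  rw [div_lt_one (mul_pos hy.1 hφ0)]
  nlinarith

theorem strictAntiOn_funA_rootYInv (hk : 2 ≤ k) (hq0 : 0 < q) (hys : ys ∈ Ioo 0 1)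
    (hpow : ys ^ k = 1 - q) : StrictAntiOn (fun y => funA k (rootYInv k q y) q) (Ioc 0 ys) := by
  have hq1 : q ≤ 1 := by linarith [pow_pos hys.1 k]
  have hsub : Ioc 0 ys ⊆ Ioo 0 1 := Ioc_subset_Ioo_right hys.2
  refine strictAntiOn_of_deriv_neg (convex_Ioc 0 ys) (fun y hy =>
    (hasDerivAt_funA_rootYInv hk hq0 hq1 (hsub hy)).continuousAt.continuousWithinAt) ?_
  rw [interior_Ioc]
  exact fun y hy => deriv_funA_rootYInv_neg hk hq0 (hsub (Ioo_subset_Ioc_self hy))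
    (hpow ▸ pow_lt_pow_left₀ hy.2 hy.1.le (by omega))

theorem strictMonoOn_funA_rootYInv (hk : 2 ≤ k) (hq0 : 0 < q) (hys : ys ∈ Ioo 0 1)
    (hpow : ys ^ k = 1 - q) : StrictMonoOn (fun y => funA k (rootYInv k q y) q) (Ico ys 1) := by
  have hq1 : q ≤ 1 := by linarith [pow_pos hys.1 k]
  have hsub : Ico ys 1 ⊆ Ioo 0 1 := Ico_subset_Ioo_left hys.1
  refine strictMonoOn_of_deriv_pos (convex_Ico ys 1) (fun y hy =>
    (hasDerivAt_funA_rootYInv hk hq0 hq1 (hsub hy)).continuousAt.continuousWithinAt) ?_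
  rw [interior_Ico]
  exact fun y hy => deriv_funA_rootYInv_pos hk hq0 hq1 (hsub (Ioo_subset_Ico_self hy))
    (hpow ▸ pow_lt_pow_left₀ hy.1 hys.1.le (by omega))

theorem rootYInv_eq_one_sub (hk : k ≠ 0) (hy : y ∈ Ioo 0 1) (hpow : y ^ k = 1 - q) :
    rootYInv k q y = 1 - y := by
  have h := one_sub_sub_rootYInv (q := q) hk hy
  rw [hpow, sub_sub_cancel, sub_self, mul_zero, zero_div] at h
  linarith

theorem funA_one_sub_eq_zero (hk : 2 ≤ k) (hy : y ∈ Ioo 0 1) (hpow : y ^ k = 1 - q) :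
    funA k (1 - y) q = 0 := by
  have hq : q ≠ 0 := by linarith [pow_lt_one₀ hy.1.le hy.2 (by omega : k ≠ 0)]
  have h1y : 1 - y ≠ 0 := (sub_pos.2 hy.2).ne'
  have hroot : rootY k (1 - y) q = y := by
    rw [← rootYInv_eq_one_sub (by omega) hy hpow, rootY_rootYInv hk hq hy]
  rw [funA, binH, hroot, mul_div_cancel_left₀ _ h1y, logb_div h1y hy.1.ne', sub_sub_cancel,
    ← hpow, logb_pow]
  linear_combination (k * logb 2 y) * hpow

end RootYInv

/-- for `k ≥ 2` and `0 < q < 1`, the function `Q ↦ A(k,Q,q)` is strictly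
decreasing on `(q/k, 1−(1−q)^{1/k}]`, strictly increasing on `[1−(1−q)^{1/k}, q)`, and
vanishes at `Q = 1−(1−q)^{1/k}`. -/
theorem stmt_12 (k : ℕ) (hk : 2 ≤ k) (q : ℝ) (hq0 : 0 < q) (hq1 : q < 1) :
    StrictAntiOn (fun Q => funA k Q q)
      (Set.Ioc (q / (k : ℝ)) (1 - (1 - q) ^ ((1 : ℝ) / (k : ℝ)))) ∧
    StrictMonoOn (fun Q => funA k Q q)
      (Set.Ico (1 - (1 - q) ^ ((1 : ℝ) / (k : ℝ))) q) ∧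
    funA k (1 - (1 - q) ^ ((1 : ℝ) / (k : ℝ))) q = 0 := by
  set ys := (1 - q) ^ ((1 : ℝ) / (k : ℝ))
  have hys : ys ∈ Ioo 0 1 :=
    ⟨rpow_pos_of_pos (by linarith) _, rpow_lt_one (by linarith) (by linarith) (by positivity)⟩
  have hpow : ys ^ k = 1 - q := by
    rw [← rpow_natCast, ← rpow_mul (by linarith), one_div_mul_cancel (by positivity), rpow_one]
  have hφys := rootYInv_eq_one_sub (by omega) hys hpow
  have hanti := rootYInv_strictAntiOn hk hq0
  have hcont : ContinuousOn (rootYInv k q) (Icc 0 1) :=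
    (continuousOn_rootYInv (by omega)).mono Icc_subset_Ici_self
  have hleft := intermediate_value_Ico' hys.2.le (hcont.mono (Icc_subset_Icc_left hys.1.le))
  have hright := intermediate_value_Ioc' hys.1.le (hcont.mono (Icc_subset_Icc_right hys.2.le))
  rw [hφys, rootYInv_one] at hleft
  rw [hφys, rootYInv_zero (by omega)] at hright
  exact ⟨strictAntiOn_of_strictMonoOn_comp (hanti.mono fun y hy => le_trans hys.1.le hy.1) hleft
      (strictMonoOn_funA_rootYInv hk hq0 hys hpow),
    strictMonoOn_of_strictAntiOn_comp (hanti.mono fun y hy => hy.1.le) hright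
      (strictAntiOn_funA_rootYInv hk hq0 hys hpow),
    funA_one_sub_eq_zero hk hys hpow⟩
end

section
/- Let k ≥ 2 be an integer and 0 < Q < 1. For y ∈ (0,1), set q(y) := Q·(1−y^k)/(1−y) and, on the set of y ∈ (0,1) where q(y) < 1, define T(y) := (1−q(y))·log₂(1−q(y)) + q(y)·log₂[Q y^k/(1−y)] + kQ·log₂[(1−y)/y] + k·h(Q). Then T is differentiable there with T′(y) = q′(y)·log₂[ Q y^k / (1 − Q − y + Q y^k) ]. Consequently T is strictly decreasing for y ∈ (0, 1−Q) and strictly increasing for y ∈ (1−Q, 1) (within the domain), with minimum value 0 at y = 1−Q. -/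
open Real Set

theorem HasDerivAt.logb {f : ℝ → ℝ} {f' x : ℝ} (b : ℝ) (hf : HasDerivAt f f' x)
    (hx : f x ≠ 0) :
    HasDerivAt (fun y => Real.logb b (f y)) (f' / f x / Real.log b) x :=
  (hf.log hx).div_const (Real.log b)

namespace EntropyExponent

noncomputable def q (k : ℕ) (Q y : ℝ) : ℝ := Q * (1 - y ^ k) / (1 - y)

noncomputable def q' (k : ℕ) (Q y : ℝ) : ℝ :=
  Q * ((1 - y ^ k) - k * y ^ (k - 1) * (1 - y)) / (1 - y) ^ 2

noncomputable def T (k : ℕ) (Q y : ℝ) : ℝ :=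
  (1 - q k Q y) * logb 2 (1 - q k Q y) + q k Q y * logb 2 (Q * y ^ k / (1 - y))
    + k * Q * logb 2 ((1 - y) / y) + k * binH Q

def domain (k : ℕ) (Q : ℝ) : Set ℝ := {y | y ∈ Ioo 0 1 ∧ q k Q y < 1}

variable {k : ℕ} {Q y : ℝ}

lemma hasDerivAt_q (hy : y ≠ 1) : HasDerivAt (q k Q) (q' k Q y) y := by
  have hnum := ((hasDerivAt_pow k y).const_sub 1).const_mul Q
  have hden := (hasDerivAt_id' y).const_sub 1
  refine (hnum.div hden (sub_ne_zero.2 hy.symm)).congr_deriv ?_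
  rw [q']
  ring

lemma q'_eq (hy0 : y ≠ 0) (hy1 : y ≠ 1) :
    q' k Q y = q k Q y * (k / y + 1 / (1 - y)) - k * Q / (y * (1 - y)) := by
  have h1y : 1 - y ≠ 0 := sub_ne_zero.2 hy1.symm
  rcases k with _ | m
  · simp [q, q']
  · simp only [q, q', Nat.add_sub_cancel, pow_succ]
    field_simp
    ring

/-- `q'(y) > 0` is the strict tangent-line inequality `k y^(k-1) < (1 - y^k)/(1 - y)` for the
strictly convex function `y ↦ y^k`. -/
lemma q'_pos (hk : 2 ≤ k) (hQ : 0 < Q) (hy0 : 0 < y) (hy1 : y < 1) : 0 < q' k Q y := by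
  have htangent : k * y ^ (k - 1) < (1 - y ^ k) / (1 - y) := by
    have := (strictConvexOn_pow hk).lt_slope_of_hasDerivAt hy0.le (mem_Ici.2 zero_le_one) hy1
      (hasDerivAt_pow k y)
    rwa [slope_def_field, one_pow] at this
  have h1y : 0 < 1 - y := sub_pos.2 hy1
  rw [lt_div_iff₀ h1y] at htangent
  exact div_pos (mul_pos hQ (by linarith)) (by positivity)

lemma one_sub_mul_one_sub_q (hy : y ≠ 1) : (1 - y) * (1 - q k Q y) = 1 - Q - y + Q * y ^ k := by
  have h1y : 1 - y ≠ 0 := sub_ne_zero.2 hy.symm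
  simp only [q]
  field_simp
  ring

lemma hasDerivAt_logb_pow_div (hQ : Q ≠ 0) (hy0 : y ≠ 0) (hy1 : y ≠ 1) :
    HasDerivAt (fun y => logb 2 (Q * y ^ k / (1 - y))) ((k / y + 1 / (1 - y)) / log 2) y := by
  have h1y : 1 - y ≠ 0 := sub_ne_zero.2 hy1.symm
  have hu : HasDerivAt (fun y => Q * y ^ k / (1 - y)) _ y :=
    ((hasDerivAt_pow k y).const_mul Q).div ((hasDerivAt_id' y).const_sub 1) h1y
  refine (hu.logb 2 (div_ne_zero (mul_ne_zero hQ (pow_ne_zero k hy0)) h1y)).congr_deriv ?_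
  rcases k with _ | m
  · field_simp
    simp
  · simp only [Nat.add_sub_cancel, pow_succ]
    field_simp
    ring

lemma hasDerivAt_logb_one_sub_div (hy0 : y ≠ 0) (hy1 : y ≠ 1) :
    HasDerivAt (fun y => logb 2 ((1 - y) / y)) (-(1 / y + 1 / (1 - y)) / log 2) y := by
  have h1y : 1 - y ≠ 0 := sub_ne_zero.2 hy1.symm
  have hv : HasDerivAt (fun y => (1 - y) / y) _ y :=
    ((hasDerivAt_id' y).const_sub 1).div (hasDerivAt_id' y) hy0
  refine (hv.logb 2 (div_ne_zero h1y hy0)).congr_deriv ?_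
  field_simp
  ring

lemma hasDerivAt_T (hQ : Q ≠ 0) (hy : y ∈ domain k Q) :
    HasDerivAt (T k Q) (q' k Q y * logb 2 (Q * y ^ k / (1 - Q - y + Q * y ^ k))) y := by
  obtain ⟨⟨hy0, hy1⟩, hq1⟩ := hy
  have h1q : 1 - q k Q y ≠ 0 := (sub_pos.2 hq1).ne'
  have hq := hasDerivAt_q (k := k) (Q := Q) hy1.ne
  have hq_sub := hq.const_sub 1
  have hT := (((hq_sub.mul (hq_sub.logb 2 h1q)).add (hq.mul
    (hasDerivAt_logb_pow_div (k := k) hQ hy0.ne' hy1.ne))).add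
    ((hasDerivAt_logb_one_sub_div hy0.ne' hy1.ne).const_mul (k * Q))).add_const (k * binH Q)
  refine hT.congr_deriv ?_
  rw [← one_sub_mul_one_sub_q hy1.ne, ← div_div, logb_div (by positivity) h1q,
    q'_eq hy0.ne' hy1.ne]
  field_simp
  ring

lemma continuousOn_q : ContinuousOn (q k Q) (Ioo 0 1) :=
  fun _ hy => (hasDerivAt_q hy.2.ne).continuousAt.continuousWithinAt

lemma strictMonoOn_q (hk : 2 ≤ k) (hQ : 0 < Q) : StrictMonoOn (q k Q) (Ioo 0 1) := by
  refine strictMonoOn_of_deriv_pos (convex_Ioo 0 1) continuousOn_q fun y hy => ?_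
  rw [interior_Ioo] at hy
  rw [(hasDerivAt_q hy.2.ne).deriv]
  exact q'_pos hk hQ hy.1 hy.2

lemma isOpen_domain : IsOpen (domain k Q) :=
  continuousOn_q.isOpen_inter_preimage isOpen_Ioo isOpen_Iio

lemma ordConnected_domain (hk : 2 ≤ k) (hQ : 0 < Q) : (domain k Q).OrdConnected :=
  ⟨fun _ hx _ hz w hw =>
    have hw01 : w ∈ Ioo 0 1 := ⟨hx.1.1.trans_le hw.1, hw.2.trans_lt hz.1.2⟩
    ⟨hw01, ((strictMonoOn_q hk hQ).monotoneOn hw01 hz.1 hw.2).trans_lt hz.2⟩⟩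

lemma one_sub_sub_add_pos (hy : y ∈ domain k Q) : 0 < 1 - Q - y + Q * y ^ k := by
  rw [← one_sub_mul_one_sub_q hy.1.2.ne]
  exact mul_pos (sub_pos.2 hy.1.2) (sub_pos.2 hy.2)

lemma deriv_T_neg (hk : 2 ≤ k) (hQ : 0 < Q) (hy : y ∈ domain k Q) (hyQ : y < 1 - Q) :
    deriv (T k Q) y < 0 := by
  have hd := one_sub_sub_add_pos hy
  rw [(hasDerivAt_T hQ.ne' hy).deriv]
  refine mul_neg_of_pos_of_neg (q'_pos hk hQ hy.1.1 hy.1.2)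
    ((logb_neg_iff one_lt_two (by have := hy.1.1; positivity)).2 ?_)
  rw [div_lt_one hd]
  linarith

lemma deriv_T_pos (hk : 2 ≤ k) (hQ : 0 < Q) (hy : y ∈ domain k Q) (hyQ : 1 - Q < y) :
    0 < deriv (T k Q) y := by
  have hd := one_sub_sub_add_pos hy
  rw [(hasDerivAt_T hQ.ne' hy).deriv]
  refine mul_pos (q'_pos hk hQ hy.1.1 hy.1.2)
    ((logb_pos_iff one_lt_two (by have := hy.1.1; positivity)).2 ?_)
  rw [one_lt_div hd]
  linarith

lemma continuousOn_T (hQ : Q ≠ 0) : ContinuousOn (T k Q) (domain k Q) :=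
  fun _ hy => (hasDerivAt_T hQ hy).continuousAt.continuousWithinAt

lemma strictAntiOn_T (hk : 2 ≤ k) (hQ : 0 < Q) :
    StrictAntiOn (T k Q) (domain k Q ∩ Iic (1 - Q)) := by
  refine strictAntiOn_of_deriv_neg ((ordConnected_domain hk hQ).inter ordConnected_Iic).convex
    ((continuousOn_T hQ.ne').mono inter_subset_left) fun y hy => ?_
  rw [interior_inter, isOpen_domain.interior_eq, interior_Iic] at hy
  exact deriv_T_neg hk hQ hy.1 hy.2

lemma strictMonoOn_T (hk : 2 ≤ k) (hQ : 0 < Q) :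
    StrictMonoOn (T k Q) (domain k Q ∩ Ici (1 - Q)) := by
  refine strictMonoOn_of_deriv_pos ((ordConnected_domain hk hQ).inter ordConnected_Ici).convex
    ((continuousOn_T hQ.ne').mono inter_subset_left) fun y hy => ?_
  rw [interior_inter, isOpen_domain.interior_eq, interior_Ici] at hy
  exact deriv_T_pos hk hQ hy.1 hy.2

lemma q_one_sub (hQ : Q ≠ 0) : q k Q (1 - Q) = 1 - (1 - Q) ^ k := by
  rw [q, sub_sub_cancel, mul_div_cancel_left₀ _ hQ]

lemma one_sub_mem_domain (hQ0 : 0 < Q) (hQ1 : Q < 1) : 1 - Q ∈ domain k Q := by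
  refine ⟨⟨sub_pos.2 hQ1, sub_lt_self 1 hQ0⟩, ?_⟩
  rw [q_one_sub hQ0.ne']
  have := pow_pos (sub_pos.2 hQ1) k
  linarith

lemma T_one_sub_eq_zero (hQ0 : Q ≠ 0) (hQ1 : Q ≠ 1) : T k Q (1 - Q) = 0 := by
  rw [T, q_one_sub hQ0, sub_sub_cancel, sub_sub_cancel, mul_div_cancel_left₀ _ hQ0, logb_pow,
    logb_div hQ0 (sub_ne_zero.2 hQ1.symm), binH]
  ring

lemma T_nonneg (hk : 2 ≤ k) (hQ0 : 0 < Q) (hQ1 : Q < 1) (hy : y ∈ domain k Q) :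
    0 ≤ T k Q y := by
  have hmem := one_sub_mem_domain (k := k) hQ0 hQ1
  rw [← T_one_sub_eq_zero (k := k) hQ0.ne' hQ1.ne]
  rcases le_total y (1 - Q) with hyQ | hyQ
  · exact (strictAntiOn_T hk hQ0).antitoneOn ⟨hy, hyQ⟩ ⟨hmem, self_mem_Iic⟩ hyQ
  · exact (strictMonoOn_T hk hQ0).monotoneOn ⟨hmem, self_mem_Ici⟩ ⟨hy, hyQ⟩ hyQ

end EntropyExponent

open EntropyExponent

/-- for `k ≥ 2`, `0 < Q < 1`, with `q(y) = Q(1−y^k)/(1−y)` and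
`T(y) = (1−q(y))log₂(1−q(y)) + q(y)log₂[Q y^k/(1−y)] + kQ log₂[(1−y)/y] + k·h(Q)`
on the set `D = {y ∈ (0,1) : q(y) < 1}`: `T` is differentiable on `D` with
`T′(y) = q′(y)·log₂[Q y^k/(1−Q−y+Q y^k)]`; consequently `T` is strictly decreasing on
`(0, 1−Q)` and strictly increasing on `(1−Q, 1)` (within `D`), with minimum value `0`
at `y = 1−Q`. -/
theorem stmt_13 (k : ℕ) (hk : 2 ≤ k) (Q : ℝ) (hQ0 : 0 < Q) (hQ1 : Q < 1)
    (qf Tf : ℝ → ℝ)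
    (hqf : ∀ y, qf y = Q * (1 - y ^ k) / (1 - y))
    (hTf : ∀ y, Tf y =
      (1 - qf y) * Real.logb 2 (1 - qf y)
        + qf y * Real.logb 2 (Q * y ^ k / (1 - y))
        + (k : ℝ) * Q * Real.logb 2 ((1 - y) / y)
        + (k : ℝ) * binH Q) :
    (∀ y ∈ {y : ℝ | y ∈ Set.Ioo (0 : ℝ) 1 ∧ qf y < 1},
        HasDerivAt Tf
          (deriv qf y * Real.logb 2 (Q * y ^ k / (1 - Q - y + Q * y ^ k))) y) ∧
    StrictAntiOn Tf ({y : ℝ | y ∈ Set.Ioo (0 : ℝ) 1 ∧ qf y < 1} ∩ Set.Ioc 0 (1 - Q)) ∧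
    StrictMonoOn Tf ({y : ℝ | y ∈ Set.Ioo (0 : ℝ) 1 ∧ qf y < 1} ∩ Set.Ico (1 - Q) 1) ∧
    Tf (1 - Q) = 0 ∧
    (∀ y ∈ {y : ℝ | y ∈ Set.Ioo (0 : ℝ) 1 ∧ qf y < 1}, 0 ≤ Tf y) := by
  obtain rfl : qf = q k Q := funext hqf
  obtain rfl : Tf = T k Q := funext hTf
  refine ⟨fun y hy => ?_,
    (strictAntiOn_T hk hQ0).mono (inter_subset_inter_right _ Ioc_subset_Iic_self),
    (strictMonoOn_T hk hQ0).mono (inter_subset_inter_right _ Ico_subset_Ici_self),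
    T_one_sub_eq_zero hQ0.ne' hQ1.ne, fun y hy => T_nonneg hk hQ0 hQ1 hy⟩
  rw [(hasDerivAt_q hy.1.2.ne).deriv]
  exact hasDerivAt_T hQ0.ne' hy
end
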